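/- For any graph G and any Roman dominating function f = (B_0, B_1, B_2) of minimum weight, the number of vertices assigned value 1 satisfies |B_1| ≥ 2γ(G) − γ_R(G). -/

import Mathlib

open Finset

/-- A set `S` is a dominating set of `G` if every vertex outside `S` has a neighbor in `S`. -/
def IsDominatingSet {V : Type*} (G : SimpleGraph V) (S : Set V) : Prop :=
  ∀ v, v ∉ S → ∃ u ∈ S, G.Adj u v

/-- The domination number `γ(G)`. -/
noncomputable def domNum {V : Type*} [Fintype V] (G : SimpleGraph V) : ℕ :=
  sInf {n | ∃ S : Finset V, IsDominatingSet G ↑S ∧ S.card = n}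

/-- A Roman dominating function: values in {0,1,2}, every vertex of value 0 has a
neighbor of value 2. -/
def IsRDF {V : Type*} (G : SimpleGraph V) (f : V → ℕ) : Prop :=
  (∀ v, f v ≤ 2) ∧ ∀ v, f v = 0 → ∃ u, G.Adj u v ∧ f u = 2

/-- The Roman domination number `γ_R(G)`. -/
noncomputable def romanDomNum {V : Type*} [Fintype V] (G : SimpleGraph V) : ℕ :=
  sInf {n | ∃ f : V → ℕ, IsRDF G f ∧ ∑ v, f v = n}

/-- The strong product of graphs. -/
def strongProd {V W : Type*} (G : SimpleGraph V) (H : SimpleGraph W) :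
    SimpleGraph (V × W) where
  Adj x y := x ≠ y ∧ (x.1 = y.1 ∨ G.Adj x.1 y.1) ∧ (x.2 = y.2 ∨ H.Adj x.2 y.2)
  symm := ⟨fun x y => by
    rintro ⟨h, h1, h2⟩
    refine ⟨h.symm, ?_, ?_⟩
    · cases h1 with
      | inl h => exact Or.inl h.symm
      | inr h => exact Or.inr h.symm
    · cases h2 with
      | inl h => exact Or.inl h.symm
      | inr h => exact Or.inr h.symm
  ⟩
  loopless := ⟨fun x => by simp⟩

/-- `G` has an efficient dominating set: a dominating set whose elements have
pairwise disjoint closed neighborhoods. -/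
def HasEfficientDomSet {V : Type*} (G : SimpleGraph V) : Prop :=
  ∃ S : Finset V, IsDominatingSet G ↑S ∧
    ∀ u ∈ S, ∀ v ∈ S, u ≠ v →
      Disjoint (insert u (G.neighborSet u)) (insert v (G.neighborSet v))

section ValuesAtMostTwo

variable {α : Type*} (s : Finset α) {f : α → ℕ}

theorem sum_eq_card_filter_ne_zero_add_card_filter_eq_two (hf : ∀ a, f a ≤ 2) :
    ∑ a ∈ s, f a = #{a ∈ s | f a ≠ 0} + #{a ∈ s | f a = 2} := by
  rw [card_filter, card_filter, ← sum_add_distrib]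
  refine sum_congr rfl fun a _ => ?_
  have := hf a
  interval_cases f a <;> rfl

theorem card_filter_ne_zero_eq_add (hf : ∀ a, f a ≤ 2) :
    #{a ∈ s | f a ≠ 0} = #{a ∈ s | f a = 1} + #{a ∈ s | f a = 2} := by
  rw [card_filter, card_filter, card_filter, ← sum_add_distrib]
  refine sum_congr rfl fun a _ => ?_
  have := hf a
  interval_cases f a <;> rfl

end ValuesAtMostTwo

theorem IsRDF.isDominatingSet_support {V : Type*} {G : SimpleGraph V} {f : V → ℕ}
    (hf : IsRDF G f) : IsDominatingSet G {v | f v ≠ 0} := by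
  intro v hv
  obtain ⟨u, hadj, hu⟩ := hf.2 v (not_not.mp hv)
  exact ⟨u, by simp [hu], hadj⟩

theorem domNum_le_card {V : Type*} [Fintype V] {G : SimpleGraph V} {S : Finset V}
    (hS : IsDominatingSet G ↑S) : domNum G ≤ #S :=
  Nat.sInf_le ⟨S, hS, rfl⟩

theorem stmt2_general {V : Type*} [Fintype V] (G : SimpleGraph V)
    (f : V → ℕ) (hf : IsRDF G f) (hmin : ∑ v, f v = romanDomNum G) :
    ((Finset.univ.filter (fun v => f v = 1)).card : ℤ) ≥
      2 * (domNum G : ℤ) - romanDomNum G := by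
  have hγ : domNum G ≤ #{v | f v ≠ 0} :=
    domNum_le_card (by simpa using hf.isDominatingSet_support)
  have hweight := sum_eq_card_filter_ne_zero_add_card_filter_eq_two univ hf.1
  have hsupport := card_filter_ne_zero_eq_add univ hf.1
  omega

theorem stmt2 {V : Type*} [Fintype V] [DecidableEq V] (G : SimpleGraph V)
    (f : V → ℕ) (hf : IsRDF G f) (hmin : ∑ v, f v = romanDomNum G) :
    ((Finset.univ.filter (fun v => f v = 1)).card : ℤ) ≥
      2 * (domNum G : ℤ) - romanDomNum G :=
  stmt2_general G f hf hmin
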